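/- arXiv:1912.00883 — 2 statements merged into one kernel-verified Lean document; each statement's English description precedes it below -/
import Mathlib

section
/- Suppose gcd(p, n) = 1, let α be a normal element of F_{q^n} with Tr(α) = n (nonzero in F_q), and let β = g ∘ α be normal. Then for c ∈ F_q, the element β − c is normal if and only if g(1) ≠ c. -/
open Polynomial

variable {Fq Fqn : Type*}

/-- Frobenius action of a polynomial on a field element: `f ∘ α = Σ aᵢ α^(q^i)`. -/
noncomputable def circ [Field Fq] [Field Fqn] [Algebra Fq Fqn] (q : ℕ) (f : Fq[X]) (α : Fqn) : Fqn :=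
  f.sum fun i a => algebraMap Fq Fqn a * α ^ q ^ i

/-- `α` is a normal element: its conjugates `α, α^q, …, α^(q^(n-1))` form an `Fq`-basis. -/
def IsNormal (Fq : Type*) {Fqn : Type*} [Field Fq] [Field Fqn] [Algebra Fq Fqn]
    (q n : ℕ) (α : Fqn) : Prop :=
  LinearIndependent Fq (fun i : Fin n => α ^ q ^ (i : ℕ)) ∧
    Submodule.span Fq (Set.range fun i : Fin n => α ^ q ^ (i : ℕ)) = ⊤

/-- `A` is the annihilator of `α`: the monic polynomial of least degree with `A ∘ α = 0`. -/
def IsAnnihilator [Field Fq] [Field Fqn] [Algebra Fq Fqn] (q : ℕ) (α : Fqn) (A : Fq[X]) : Prop :=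
  A.Monic ∧ circ q A α = 0 ∧ ∀ B : Fq[X], B.Monic → circ q B α = 0 → A.degree ≤ B.degree

/-!
The `q`-Frobenius fixes `F_q`, so the conjugates of `β - c` are the conjugates of `β` shifted
by `c`. Shifting a basis `(bᵢ)` by a vector `w` keeps it independent iff the coordinates of `w`
do not sum to `1`. Since the trace is Frobenius-invariant, it equals `Tr β` times the coordinate
sum, and `Tr β ≠ 0` for normal `β`; hence `β - c` is normal iff `Tr (β - c) ≠ 0`. Finally
`Tr (g ∘ α) = g(1) Tr α = n g(1)`, so `Tr (β - c) = n (g(1) - c)`, and `n ≠ 0` in `F_q`.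
-/

section LinearAlgebra

variable {K V ι : Type*} [Field K] [AddCommGroup V] [Module K V] [Fintype ι]

theorem LinearIndependent.sum_ne_zero [Nonempty ι] {v : ι → V} (hv : LinearIndependent K v) :
    ∑ i, v i ≠ 0 := fun h =>
  one_ne_zero <| Fintype.linearIndependent_iff.mp hv (fun _ => 1) (by simpa using h)
    (Classical.arbitrary ι)

theorem Module.Basis.eq_smul_sumCoords (b : Module.Basis ι K V) (f : V →ₗ[K] K) {t : K}
    (hf : ∀ i, f (b i) = t) : f = t • b.sumCoords :=
  b.ext fun i => by simp [hf]

theorem Module.Basis.sum_repr_eq_sumCoords (b : Module.Basis ι K V) (w : V) :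
    ∑ i, b.repr w i = b.sumCoords w := by
  simp

theorem Module.Basis.linearIndependent_sub_iff (b : Module.Basis ι K V) (w : V) :
    LinearIndependent K (fun i => b i - w) ↔ b.sumCoords w ≠ 1 := by
  have hcomb (a : ι → K) :
      ∑ i, a i • (b i - w) = ∑ i, a i • b i - (∑ i, a i) • w := by
    simp only [smul_sub, Finset.sum_sub_distrib, Finset.sum_smul]
  constructor
  · intro hli hw
    have hzero : ∑ i, b.repr w i • (b i - w) = 0 := by
      rw [hcomb, b.sum_repr, b.sum_repr_eq_sumCoords, hw, one_smul, sub_self]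
    have hcoord := Fintype.linearIndependent_iff.mp hli _ hzero
    rw [← b.sum_repr_eq_sumCoords] at hw
    simp [hcoord] at hw
  · intro hw
    refine Fintype.linearIndependent_iff.mpr fun a ha => ?_
    rw [hcomb, sub_eq_zero] at ha
    have hsum : ∑ i, a i = (∑ i, a i) * b.sumCoords w := by
      simpa using congrArg b.sumCoords ha
    have hsum0 : ∑ i, a i = 0 := by
      by_contra h
      exact hw (mul_left_cancel₀ h (by rw [mul_one]; exact hsum)).symm
    rw [hsum0, zero_smul] at ha
    exact Fintype.linearIndependent_iff.mp b.linearIndependent a ha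

end LinearAlgebra

theorem isNormal_iff_linearIndependent {K L : Type*} [Field K] [Field L] [Algebra K L]
    [FiniteDimensional K L] (q : ℕ) (x : L) :
    IsNormal K q (Module.finrank K L) x ↔
      LinearIndependent K (fun i : Fin (Module.finrank K L) => x ^ q ^ (i : ℕ)) :=
  ⟨And.left, fun hli => ⟨hli, hli.span_eq_top_of_card_eq_finrank' (Fintype.card_fin _)⟩⟩

namespace FiniteField

variable {K L : Type*} [Field K] [Fintype K] [Field L] [Algebra K L]

theorem natCast_ne_zero_of_coprime {p m n : ℕ} (hcard : Fintype.card K = p ^ m)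
    (hcop : p.Coprime n) : (n : K) ≠ 0 := by
  have hp : (p : K) = 0 :=
    eq_zero_of_pow_eq_zero (by rw [← Nat.cast_pow, ← hcard, cast_card_eq_zero])
  exact (isCoprime_zero_left.mp (hp ▸ hcop.cast)).ne_zero

theorem sub_algebraMap_pow_card_pow (x : L) (c : K) (i : ℕ) :
    (x - algebraMap K L c) ^ Fintype.card K ^ i = x ^ Fintype.card K ^ i - algebraMap K L c := by
  have hfrob : ∀ y : L, (frobeniusAlgHom K L ^ i) y = y ^ Fintype.card K ^ i := fun y => by
    rw [AlgHom.coe_pow, coe_frobeniusAlgHom, pow_iterate]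
  rw [← hfrob, ← hfrob, map_sub, AlgHom.commutes]

theorem trace_pow_card_pow [Algebra.IsAlgebraic K L] (x : L) (i : ℕ) :
    Algebra.trace K L (x ^ Fintype.card K ^ i) = Algebra.trace K L x := by
  rw [← Algebra.trace_eq_of_algEquiv (frobeniusAlgEquivOfAlgebraic K L ^ i) x, AlgEquiv.coe_pow,
    coe_frobeniusAlgEquivOfAlgebraic_iterate]

end FiniteField

theorem trace_circ {K L : Type*} [Field K] [Fintype K] [Field L] [Algebra K L]
    [Algebra.IsAlgebraic K L] (g : K[X]) (α : L) :
    Algebra.trace K L (circ (Fintype.card K) g α) = g.eval 1 * Algebra.trace K L α := by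
  simp only [circ, Polynomial.sum, map_sum, ← Algebra.smul_def, map_smul,
    FiniteField.trace_pow_card_pow, smul_eq_mul, ← Finset.sum_mul, Polynomial.eval_eq_sum,
    one_pow, mul_one]

section NormalElement

variable {K L : Type*} [Field K] [Fintype K] [Field L] [Algebra K L] [Finite L]

theorem IsNormal.trace_ne_zero {β : L}
    (hβ : IsNormal K (Fintype.card K) (Module.finrank K L) β) : Algebra.trace K L β ≠ 0 := by
  have : Nonempty (Fin (Module.finrank K L)) := ⟨⟨0, Module.finrank_pos⟩⟩
  intro h
  apply hβ.1.sum_ne_zero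
  calc ∑ i : Fin (Module.finrank K L), β ^ Fintype.card K ^ (i : ℕ)
      = ∑ i ∈ Finset.range (Module.finrank K L), β ^ Nat.card K ^ i := by
        rw [Fin.sum_univ_eq_sum_range (fun i => β ^ Fintype.card K ^ i), Nat.card_eq_fintype_card]
    _ = algebraMap K L (Algebra.trace K L β) :=
        (FiniteField.algebraMap_trace_eq_sum_pow K L β).symm
    _ = 0 := by rw [h, map_zero]

theorem IsNormal.sub_algebraMap_iff {β : L}
    (hβ : IsNormal K (Fintype.card K) (Module.finrank K L) β) (c : K) :
    IsNormal K (Fintype.card K) (Module.finrank K L) (β - algebraMap K L c) ↔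
      Algebra.trace K L (β - algebraMap K L c) ≠ 0 := by
  let b := Module.Basis.mk hβ.1 hβ.2.ge
  have hb : ∀ i, b i = β ^ Fintype.card K ^ (i : ℕ) := Module.Basis.mk_apply _ _
  have hconj : (fun i : Fin (Module.finrank K L) =>
      (β - algebraMap K L c) ^ Fintype.card K ^ (i : ℕ)) = fun i => b i - algebraMap K L c := by
    funext i
    rw [hb, FiniteField.sub_algebraMap_pow_card_pow]
  have htrace : Algebra.trace K L = Algebra.trace K L β • b.sumCoords :=
    b.eq_smul_sumCoords _ fun i => by rw [hb, FiniteField.trace_pow_card_pow]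
  have htrace_c : Algebra.trace K L (algebraMap K L c) =
      Algebra.trace K L β * b.sumCoords (algebraMap K L c) :=
    LinearMap.congr_fun htrace _
  rw [isNormal_iff_linearIndependent, hconj, b.linearIndependent_sub_iff, map_sub, htrace_c,
    ← mul_one_sub, mul_ne_zero_iff, sub_ne_zero, ne_comm]
  exact (and_iff_right hβ.trace_ne_zero).symm

end NormalElement

theorem stmt14_general (p m q n : ℕ) [Field Fq] [Fintype Fq] [Field Fqn] [Algebra Fq Fqn]
    (hpq : q = p ^ m) (hcard : Fintype.card Fq = q)
    (hn : 0 < n) (hcop : Nat.Coprime p n) (hrank : Module.finrank Fq Fqn = n)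
    (α : Fqn) (htr : Algebra.trace Fq Fqn α = (n : Fq))
    (g : Fq[X]) (hβ : IsNormal Fq q n (circ q g α)) (c : Fq) :
    IsNormal Fq q n (circ q g α - algebraMap Fq Fqn c) ↔ g.eval 1 ≠ c := by
  subst hcard hrank
  have hn0 := FiniteField.natCast_ne_zero_of_coprime hpq hcop
  have : Module.Finite Fq Fqn := Module.finite_of_finrank_pos hn
  have : Finite Fqn := Module.finite_of_finite Fq
  rw [hβ.sub_algebraMap_iff, map_sub, trace_circ, htr, Algebra.trace_algebraMap, nsmul_eq_mul,
    mul_comm, ← mul_sub, mul_ne_zero_iff, sub_ne_zero]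
  exact and_iff_right hn0

theorem stmt14 (p m q n : ℕ) [Field Fq] [Fintype Fq] [Field Fqn] [Algebra Fq Fqn]
    (hp : p.Prime) (hm : 0 < m) (hpq : q = p ^ m) (hcard : Fintype.card Fq = q)
    (hn : 0 < n) (hcop : Nat.Coprime p n) (hrank : Module.finrank Fq Fqn = n)
    (α : Fqn) (hα : IsNormal Fq q n α) (htr : Algebra.trace Fq Fqn α = (n : Fq))
    (g : Fq[X]) (hβ : IsNormal Fq q n (circ q g α)) (c : Fq) :
    IsNormal Fq q n (circ q g α - algebraMap Fq Fqn c) ↔ g.eval 1 ≠ c :=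
  stmt14_general p m q n hpq hcard hn hcop hrank α htr g hβ c
end

section
/- Let α be normal in F_{q^n} and β = g ∘ α. Then β is (α, b)-sociable if and only if for every root θ of x^n − 1 (in the algebraic closure of F_q), g(θ) ∉ {c·θ^j : c ∈ {0, ..., b−1}, j ∈ {0, ..., n−1}}. -/
/-!
Let `σ x = x ^ q` be the Frobenius of `F_{q^n}/F_q`, so that `f ∘ α = f(σ) α` and `σ ^ n = 1`.
A normal `α` is a cyclic vector for `σ` with annihilator `X ^ n - 1`, hence `f ∘ α` is normal
exactly when `f` is coprime to `X ^ n - 1`, i.e. when `f(θ) ≠ 0` for every `n`-th root of unity `θ`.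
Since `β ^ (q ^ i) - c α = (X ^ i g - c) ∘ α`, sociability says `θ ^ i g(θ) ≠ c` for all such `θ`,
`i < n`, `c < b`; multiplying by `θ ^ j = θ ^ (-i)` turns this into `g(θ) ≠ c θ ^ j`.
-/

open Polynomial

variable {Fq Fqn : Type*}

section CyclicVector

open Submodule

variable {K V : Type*} [Field K] [AddCommGroup V] [Module K V]
  {T : Module.End K V} {P : K[X]} {n : ℕ}

lemma aeval_apply_eq_sum_fin {r : K[X]} (hr : r.natDegree < n) (x : V) :
    aeval T r x = ∑ i : Fin n, r.coeff i • (T ^ (i : ℕ)) x := by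
  rw [aeval_eq_sum_range' hr, LinearMap.sum_apply, ← Fin.sum_univ_eq_sum_range]
  rfl

lemma natDegree_modByMonic_lt_of_ne_zero (hP : P.Monic) (hdeg : P.natDegree = n) (u : K[X])
    (hu : u %ₘ P ≠ 0) : (u %ₘ P).natDegree < n := by
  rw [natDegree_lt_iff_degree_lt hu, ← hdeg, ← degree_eq_natDegree hP.ne_zero]
  exact degree_modByMonic_lt u hP

lemma aeval_apply_mem_span_pow_apply (hP : P.Monic) (hdeg : P.natDegree = n)
    (hTP : aeval T P = 0) (u : K[X]) (x : V) :
    aeval T u x ∈ span K (Set.range fun i : Fin n => (T ^ (i : ℕ)) x) := by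
  rw [← aeval_modByMonic_eq_self_of_root hTP]
  by_cases hu : u %ₘ P = 0
  · simp [hu]
  rw [aeval_apply_eq_sum_fin (natDegree_modByMonic_lt_of_ne_zero hP hdeg u hu)]
  exact sum_mem fun i _ => smul_mem _ _ (subset_span ⟨i, rfl⟩)

lemma dvd_of_aeval_apply_eq_zero (hP : P.Monic) (hdeg : P.natDegree = n)
    (hTP : aeval T P = 0) {x : V} (hx : LinearIndependent K fun i : Fin n => (T ^ (i : ℕ)) x)
    {u : K[X]} (hu : aeval T u x = 0) : P ∣ u := by
  rw [← modByMonic_eq_zero_iff_dvd hP]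
  by_contra hr
  have hlt := natDegree_modByMonic_lt_of_ne_zero hP hdeg u hr
  have hcoeff := Fintype.linearIndependent_iff.mp hx (fun i => (u %ₘ P).coeff i) <| by
    rw [← aeval_apply_eq_sum_fin hlt, aeval_modByMonic_eq_self_of_root hTP, hu]
  exact hr (leadingCoeff_eq_zero.mp (hcoeff ⟨_, hlt⟩))

lemma span_pow_apply_eq_top_iff (hP : P.Monic) (hdeg : P.natDegree = n)
    (hTP : aeval T P = 0) (x : V) :
    span K (Set.range fun i : Fin n => (T ^ (i : ℕ)) x) = ⊤ ↔ ∀ y, ∃ u : K[X], aeval T u x = y := by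
  constructor
  · intro hspan y
    obtain ⟨c, hc⟩ := (mem_span_range_iff_exists_fun K).mp (hspan ▸ mem_top : y ∈ _)
    refine ⟨∑ i : Fin n, monomial i (c i), ?_⟩
    simp [← hc, aeval_monomial]
  · intro h
    refine eq_top_iff.mpr fun y _ => ?_
    obtain ⟨u, rfl⟩ := h y
    exact aeval_apply_mem_span_pow_apply hP hdeg hTP u x

theorem span_pow_aeval_apply_eq_top_iff_isCoprime (hP : P.Monic) (hdeg : P.natDegree = n)
    (hTP : aeval T P = 0) {x : V} (hx : LinearIndependent K fun i : Fin n => (T ^ (i : ℕ)) x)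
    (hxspan : span K (Set.range fun i : Fin n => (T ^ (i : ℕ)) x) = ⊤) (f : K[X]) :
    span K (Set.range fun i : Fin n => (T ^ (i : ℕ)) (aeval T f x)) = ⊤ ↔ IsCoprime f P := by
  have hcomp (u : K[X]) : aeval T u (aeval T f x) = aeval T (u * f) x := by
    rw [map_mul, Module.End.mul_apply]
  simp_rw [span_pow_apply_eq_top_iff hP hdeg hTP, hcomp]
  constructor
  · intro h
    obtain ⟨u, hu⟩ := h x
    obtain ⟨v, hv⟩ := dvd_of_aeval_apply_eq_zero hP hdeg hTP hx (u := u * f - 1) <| by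
      rw [map_sub, LinearMap.sub_apply, hu, map_one, Module.End.one_apply, sub_self]
    exact ⟨u, -v, by linear_combination hv⟩
  · rintro ⟨u, v, huv⟩ y
    obtain ⟨w, rfl⟩ := (span_pow_apply_eq_top_iff hP hdeg hTP x).mp hxspan y
    refine ⟨w * u, ?_⟩
    rw [show w * u * f = w - w * v * P by linear_combination w * huv]
    simp [hTP]

end CyclicVector

section Frobenius

open FiniteField

variable [Field Fq] [Fintype Fq] [Field Fqn] [Algebra Fq Fqn]

lemma frobeniusAlgHom_pow_apply (i : ℕ) (x : Fqn) :
    ((frobeniusAlgHom Fq Fqn).toLinearMap ^ i) x = x ^ Fintype.card Fq ^ i := by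
  rw [Module.End.coe_pow, AlgHom.coe_toLinearMap, coe_frobeniusAlgHom, pow_iterate]

lemma circ_eq_aeval_frobeniusAlgHom (f : Fq[X]) (x : Fqn) :
    circ (Fintype.card Fq) f x = aeval (frobeniusAlgHom Fq Fqn).toLinearMap f x := by
  rw [circ, aeval_def, eval₂_eq_sum, Polynomial.sum_def, Polynomial.sum_def, LinearMap.sum_apply]
  refine Finset.sum_congr rfl fun i _ => ?_
  rw [Module.End.mul_apply, Module.algebraMap_end_apply, frobeniusAlgHom_pow_apply,
    Algebra.smul_def]

lemma circ_pow_sub_nsmul (g : Fq[X]) (x : Fqn) (i c : ℕ) :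
    circ (Fintype.card Fq) g x ^ Fintype.card Fq ^ i - c • x =
      circ (Fintype.card Fq) (X ^ i * g - C (c : Fq)) x := by
  simp only [circ_eq_aeval_frobeniusAlgHom, map_sub, map_mul, map_pow, aeval_X, aeval_C,
    LinearMap.sub_apply, Module.End.mul_apply, frobeniusAlgHom_pow_apply,
    Module.algebraMap_end_apply, Nat.cast_smul_eq_nsmul]

theorem isNormal_circ_iff_isCoprime [FiniteDimensional Fq Fqn] {x : Fqn}
    (hx : IsNormal Fq (Fintype.card Fq) (Module.finrank Fq Fqn) x) (f : Fq[X]) :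
    IsNormal Fq (Fintype.card Fq) (Module.finrank Fq Fqn) (circ (Fintype.card Fq) f x) ↔
      IsCoprime f (X ^ Module.finrank Fq Fqn - 1) := by
  have : Finite Fqn := Module.finite_of_finite Fq
  have hn := Module.finrank_pos (R := Fq) (M := Fqn)
  have hP : (X ^ Module.finrank Fq Fqn - 1 : Fq[X]).Monic := leadingCoeff_X_pow_sub_one hn
  have hdeg : (X ^ Module.finrank Fq Fqn - 1 : Fq[X]).natDegree = Module.finrank Fq Fqn := by
    rw [← C_1, natDegree_X_pow_sub_C]
  have hTP := minpoly_frobeniusAlgHom Fq Fqn ▸ minpoly.aeval Fq (frobeniusAlgHom Fq Fqn).toLinearMap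
  simp only [IsNormal, ← frobeniusAlgHom_pow_apply] at hx ⊢
  rw [circ_eq_aeval_frobeniusAlgHom, and_iff_right_of_imp fun h =>
    linearIndependent_of_top_le_span_of_card_eq_finrank h.ge (Fintype.card_fin _)]
  exact span_pow_aeval_apply_eq_top_iff_isCoprime hP hdeg hTP hx.1 hx.2 f

end Frobenius

lemma isCoprime_X_pow_sub_one_iff {K : Type*} [Field K] (n : ℕ) (f : K[X]) :
    IsCoprime f (X ^ n - 1) ↔ ∀ θ : AlgebraicClosure K, θ ^ n = 1 → aeval θ f ≠ 0 := by
  rw [isCoprime_iff_aeval_ne_zero_of_isAlgClosed K (AlgebraicClosure K)]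
  simp [sub_eq_zero, or_iff_not_imp_right]

lemma exists_pow_mul_pow_eq_one {M : Type*} [Monoid M] {θ : M} {n j : ℕ} (hθ : θ ^ n = 1)
    (hj : j < n) : ∃ i < n, θ ^ i * θ ^ j = 1 := by
  rcases eq_or_ne j 0 with rfl | hj0
  · exact ⟨0, hj, by simp⟩
  · exact ⟨n - j, by omega, by rw [← pow_add, Nat.sub_add_cancel hj.le, hθ]⟩

lemma forall_pow_mul_ne_iff_forall_ne_mul_pow {M : Type*} [CommMonoid M] {θ a c : M} {n : ℕ}
    (hθ : θ ^ n = 1) : (∀ i < n, θ ^ i * a ≠ c) ↔ ∀ j < n, a ≠ c * θ ^ j := by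
  constructor
  · intro h j hj hcon
    obtain ⟨i, hi, hij⟩ := exists_pow_mul_pow_eq_one hθ hj
    exact h i hi (by rw [hcon, mul_left_comm, hij, mul_one])
  · intro h i hi hcon
    obtain ⟨j, hj, hji⟩ := exists_pow_mul_pow_eq_one hθ hi
    exact h j hj (by rw [← hcon, mul_right_comm, mul_comm (θ ^ i), hji, one_mul])

theorem stmt16_general (q n b : ℕ) [Field Fq] [Fintype Fq] [Field Fqn] [Algebra Fq Fqn]
    (hcard : Fintype.card Fq = q)
    (hn : 0 < n) (hrank : Module.finrank Fq Fqn = n)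
    (α : Fqn) (hα : IsNormal Fq q n α) (g : Fq[X]) :
    (∀ i : ℕ, i < n → ∀ c : ℕ, c < b → IsNormal Fq q n ((circ q g α) ^ q ^ i - c • α)) ↔
      (∀ θ : AlgebraicClosure Fq, θ ^ n = 1 →
        ∀ c : ℕ, c < b → ∀ j : ℕ, j < n →
          Polynomial.aeval θ g ≠ (c : AlgebraicClosure Fq) * θ ^ j) := by
  subst hcard hrank
  have : FiniteDimensional Fq Fqn := Module.finite_of_finrank_pos hn
  have hshift (i c : ℕ) : IsNormal Fq (Fintype.card Fq) (Module.finrank Fq Fqn)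
      (circ (Fintype.card Fq) g α ^ Fintype.card Fq ^ i - c • α) ↔
      ∀ θ : AlgebraicClosure Fq, θ ^ Module.finrank Fq Fqn = 1 → θ ^ i * aeval θ g ≠ c := by
    rw [circ_pow_sub_nsmul, isNormal_circ_iff_isCoprime hα, isCoprime_X_pow_sub_one_iff]
    simp [sub_eq_zero]
  simp_rw [hshift]
  constructor
  · intro h θ hθ c hc
    exact (forall_pow_mul_ne_iff_forall_ne_mul_pow hθ).mp fun i hi => h i hi c hc θ hθ
  · intro h i hi c hc θ hθ
    exact (forall_pow_mul_ne_iff_forall_ne_mul_pow hθ).mpr (h θ hθ c hc) i hi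

theorem stmt16 (p m q n b : ℕ) [Field Fq] [Fintype Fq] [Field Fqn] [Algebra Fq Fqn]
    (hp : p.Prime) (hm : 0 < m) (hpq : q = p ^ m) (hcard : Fintype.card Fq = q)
    (hn : 0 < n) (hrank : Module.finrank Fq Fqn = n) (hb : b ≤ p)
    (α : Fqn) (hα : IsNormal Fq q n α) (g : Fq[X]) :
    (∀ i : ℕ, i < n → ∀ c : ℕ, c < b → IsNormal Fq q n ((circ q g α) ^ q ^ i - c • α)) ↔
      (∀ θ : AlgebraicClosure Fq, θ ^ n = 1 →
        ∀ c : ℕ, c < b → ∀ j : ℕ, j < n →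
          Polynomial.aeval θ g ≠ (c : AlgebraicClosure Fq) * θ ^ j) :=
  stmt16_general q n b hcard hn hrank α hα g
end
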